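/- Let f be bi-univalent with inverse extension F. If 1 + zf''(z)/f'(z) ≺ φ(z) and F'(w) ≺ φ(w), then the third Taylor coefficient of f satisfies |a₃| ≤ 5(B₁ + |B₂ − B₁|)/12. -/

import Mathlib

/-!
Let `ω(z) = c₁z + c₂z² + ⋯` and `ψ(w) = d₁w + d₂w² + ⋯` be the Schwarz functions of the two
subordinations, and `a₂ = f''(0)/2`, `a₃ = f'''(0)/6`. Comparing derivatives up to order two
at `0` gives `2a₂ = B₁c₁` and `6a₃ - 4a₂² = B₁c₂ + B₂c₁²`; differentiating `F'(f z) f'(z) = 1`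
gives `F''(0) = -2a₂` and `F'''(0) = 12a₂² - 6a₃`, hence `-2a₂ = B₁d₁` and
`6a₂² - 3a₃ = B₁d₂ + B₂d₁²`. So `d₁ = -c₁` and
`12a₃ = 3B₁(c₂ + c₁²) + 2B₁(d₂ + d₁²) + 5(B₂ - B₁)c₁²`. Schwarz–Pick applied to `ω(z)/z` gives
`|c₂| ≤ 1 - |c₁|²`, which bounds `|c₂ + c₁²|`, `|d₂ + d₁²|` and `|c₁|²` by `1`.
-/

open Metric Set Complex

noncomputable section

/-- `g` is subordinate to `h` on the unit disk: there is an analytic `ω : 𝔻 → 𝔻`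
with `ω 0 = 0` such that `g = h ∘ ω` on `𝔻`. -/
def Subordinate (g h : ℂ → ℂ) : Prop :=
  ∃ ω : ℂ → ℂ, DifferentiableOn ℂ ω (ball 0 1) ∧ ω 0 = 0 ∧
    (∀ z ∈ ball (0 : ℂ) 1, ω z ∈ ball (0 : ℂ) 1) ∧
    ∀ z ∈ ball (0 : ℂ) 1, g z = h (ω z)

open Filter Topology

section Calculus

variable {𝕜 : Type*} [NontriviallyNormedField 𝕜] {f g h ω : 𝕜 → 𝕜} {x : 𝕜}

theorem iteratedDeriv_two_eq_deriv_deriv : iteratedDeriv 2 f x = deriv (deriv f) x := by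
  rw [iteratedDeriv_succ', iteratedDeriv_one]

theorem iteratedDeriv_three_eq_iteratedDeriv_two_deriv :
    iteratedDeriv 3 f x = iteratedDeriv 2 (deriv f) x := by
  rw [iteratedDeriv_succ']

theorem deriv_fun_comp (hh : DifferentiableAt 𝕜 h (ω x)) (hω : DifferentiableAt 𝕜 ω x) :
    deriv (fun z ↦ h (ω z)) x = deriv h (ω x) * deriv ω x :=
  deriv_comp x hh hω

variable [CompleteSpace 𝕜]

theorem AnalyticAt.iteratedDeriv_two_mul (hf : AnalyticAt 𝕜 f x) (hg : AnalyticAt 𝕜 g x) :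
    iteratedDeriv 2 (fun z ↦ f z * g z) x =
      iteratedDeriv 2 f x * g x + 2 * deriv f x * deriv g x + f x * iteratedDeriv 2 g x := by
  simp [iteratedDeriv_fun_mul hf.contDiffAt hg.contDiffAt, Finset.sum_range_succ]
  ring

theorem AnalyticAt.deriv_comp_eventuallyEq (hh : AnalyticAt 𝕜 h (ω x)) (hω : AnalyticAt 𝕜 ω x) :
    deriv (fun z ↦ h (ω z)) =ᶠ[𝓝 x] fun z ↦ deriv h (ω z) * deriv ω z := by
  filter_upwards [hω.eventually_analyticAt,
    hω.continuousAt.eventually hh.eventually_analyticAt] with z hωz hhz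
  exact deriv_fun_comp hhz.differentiableAt hωz.differentiableAt

theorem AnalyticAt.iteratedDeriv_two_comp (hh : AnalyticAt 𝕜 h (ω x)) (hω : AnalyticAt 𝕜 ω x) :
    iteratedDeriv 2 (fun z ↦ h (ω z)) x =
      iteratedDeriv 2 h (ω x) * deriv ω x ^ 2 + deriv h (ω x) * iteratedDeriv 2 ω x := by
  have hh' : AnalyticAt 𝕜 (fun z ↦ deriv h (ω z)) x := hh.deriv.comp hω
  rw [iteratedDeriv_two_eq_deriv_deriv, (hh.deriv_comp_eventuallyEq hω).deriv_eq,
    deriv_fun_mul hh'.differentiableAt hω.deriv.differentiableAt,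
    deriv_fun_comp hh.deriv.differentiableAt hω.differentiableAt,
    iteratedDeriv_two_eq_deriv_deriv, iteratedDeriv_two_eq_deriv_deriv]
  ring

theorem eventually_deriv_comp_mul_deriv_eq_one {F : 𝕜 → 𝕜} (hf : AnalyticAt 𝕜 f x)
    (hF : AnalyticAt 𝕜 F (f x)) (hFf : ∀ᶠ z in 𝓝 x, F (f z) = z) :
    ∀ᶠ z in 𝓝 x, deriv F (f z) * deriv f z = 1 := by
  filter_upwards [(hF.deriv_comp_eventuallyEq hf).symm.trans (EventuallyEq.deriv hFf)]
    with z hz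
  simpa using hz

theorem deriv_eq_and_iteratedDeriv_two_eq_of_comp_mul_deriv_eq_one {G : 𝕜 → 𝕜}
    (hf : AnalyticAt 𝕜 f x) (hG : AnalyticAt 𝕜 G (f x)) (hf1 : deriv f x = 1)
    (hGf : (fun z ↦ G (f z) * deriv f z) =ᶠ[𝓝 x] fun _ ↦ 1) :
    deriv G (f x) = -iteratedDeriv 2 f x ∧
      iteratedDeriv 2 G (f x) = 3 * iteratedDeriv 2 f x ^ 2 - iteratedDeriv 3 f x := by
  have hGfa : AnalyticAt 𝕜 (fun z ↦ G (f z)) x := hG.comp hf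
  have h₀ : G (f x) = 1 := by simpa [hf1] using hGf.self_of_nhds
  have h₁ := hGf.deriv_eq
  rw [deriv_fun_mul hGfa.differentiableAt hf.deriv.differentiableAt,
    deriv_fun_comp hG.differentiableAt hf.differentiableAt] at h₁
  have h₂ := hGf.iteratedDeriv_eq 2
  rw [hGfa.iteratedDeriv_two_mul hf.deriv, hG.iteratedDeriv_two_comp hf,
    deriv_fun_comp hG.differentiableAt hf.differentiableAt, iteratedDeriv_const,
    if_neg two_ne_zero] at h₂
  rw [iteratedDeriv_three_eq_iteratedDeriv_two_deriv, iteratedDeriv_two_eq_deriv_deriv]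
  simp only [hf1, h₀, deriv_const, ← iteratedDeriv_two_eq_deriv_deriv] at h₁ h₂ ⊢
  constructor
  · linear_combination h₁
  · linear_combination h₂ - 3 * iteratedDeriv 2 f x * h₁

theorem deriv_and_iteratedDeriv_two_one_add_mul_deriv_div_deriv (hf : AnalyticAt 𝕜 f 0)
    (hf1 : deriv f 0 = 1) :
    deriv (fun z ↦ 1 + z * deriv (deriv f) z / deriv f z) 0 = iteratedDeriv 2 f 0 ∧
      iteratedDeriv 2 (fun z ↦ 1 + z * deriv (deriv f) z / deriv f z) 0 =
        2 * iteratedDeriv 3 f 0 - 2 * iteratedDeriv 2 f 0 ^ 2 := by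
  set p : 𝕜 → 𝕜 := fun z ↦ 1 + z * deriv (deriv f) z / deriv f z with hp_def
  have hf1' : deriv f 0 ≠ 0 := by simp [hf1]
  have hz : AnalyticAt 𝕜 (fun z : 𝕜 ↦ z) 0 := analyticAt_id
  have hzf : AnalyticAt 𝕜 (fun z ↦ z * deriv (deriv f) z) 0 := hz.mul hf.deriv.deriv
  have hp : AnalyticAt 𝕜 p 0 := analyticAt_const.add (hzf.div hf.deriv hf1')
  have hp0 : p 0 = 1 := by simp [hp_def]
  have hpf : (fun z ↦ p z * deriv f z) =ᶠ[𝓝 0] fun z ↦ deriv f z + z * deriv (deriv f) z := by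
    filter_upwards [hf.deriv.continuousAt.eventually_ne hf1'] with z hfz
    simp only [hp_def]
    field_simp
  have h₁ := hpf.deriv_eq
  rw [deriv_fun_mul hp.differentiableAt hf.deriv.differentiableAt,
    deriv_fun_add hf.deriv.differentiableAt hzf.differentiableAt,
    deriv_fun_mul hz.differentiableAt hf.deriv.deriv.differentiableAt] at h₁
  have h₂ := hpf.iteratedDeriv_eq 2
  rw [hp.iteratedDeriv_two_mul hf.deriv, iteratedDeriv_fun_add hf.deriv.contDiffAt hzf.contDiffAt,
    hz.iteratedDeriv_two_mul hf.deriv.deriv] at h₂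
  rw [iteratedDeriv_three_eq_iteratedDeriv_two_deriv, iteratedDeriv_two_eq_deriv_deriv]
  simp only [hf1, hp0, iteratedDeriv_fun_id_zero, (by decide : (2 : ℕ) ≠ 1), if_false,
    deriv_id'', ← iteratedDeriv_two_eq_deriv_deriv] at h₁ h₂ ⊢
  constructor
  · linear_combination h₁
  · linear_combination h₂ - 2 * iteratedDeriv 2 f 0 * h₁

end Calculus

section SchwarzPick

open ComplexConjugate

theorem norm_sub_le_norm_one_sub_conj_mul {a w : ℂ} (ha : ‖a‖ ≤ 1) (hw : ‖w‖ ≤ 1) :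
    ‖w - a‖ ≤ ‖1 - conj a * w‖ := by
  have key : ‖1 - conj a * w‖ ^ 2 - ‖w - a‖ ^ 2 = (1 - ‖a‖ ^ 2) * (1 - ‖w‖ ^ 2) := by
    simp only [Complex.sq_norm, Complex.normSq_apply, Complex.sub_re, Complex.sub_im,
      Complex.mul_re, Complex.mul_im, Complex.one_re, Complex.one_im, Complex.conj_re,
      Complex.conj_im]
    ring
  have : 0 ≤ (1 - ‖a‖ ^ 2) * (1 - ‖w‖ ^ 2) := by
    apply mul_nonneg <;> nlinarith [norm_nonneg a, norm_nonneg w]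
  nlinarith [norm_nonneg (w - a), norm_nonneg (1 - conj a * w)]

theorem one_sub_conj_mul_ne_zero {a w : ℂ} (ha : ‖a‖ < 1) (hw : ‖w‖ ≤ 1) :
    1 - conj a * w ≠ 0 := by
  rw [sub_ne_zero]
  refine fun h ↦ (norm_mul_le (conj a) w).not_gt ?_
  rw [← h, norm_one, Complex.norm_conj]
  nlinarith [norm_nonneg a, norm_nonneg w]

theorem norm_deriv_le_one_sub_sq_of_mapsTo_closedBall {u : ℂ → ℂ}
    (hu : DifferentiableOn ℂ u (ball 0 1)) (hmaps : MapsTo u (ball 0 1) (closedBall 0 1)) :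
    ‖deriv u 0‖ ≤ 1 - ‖u 0‖ ^ 2 := by
  have h0 : (0 : ℂ) ∈ ball (0 : ℂ) 1 := mem_ball_self one_pos
  have hnorm : ∀ z ∈ ball (0 : ℂ) 1, ‖u z‖ ≤ 1 := fun z hz ↦ by simpa using hmaps hz
  -- Schwarz–Pick at the centre: compose with the disc automorphism sending `u 0` to `0`.
  rcases (hnorm 0 h0).lt_or_eq with hlt | heq
  · set a := u 0 with ha
    set g : ℂ → ℂ := fun z ↦ (u z - a) / (1 - conj a * u z)
    have hden : ∀ z ∈ ball (0 : ℂ) 1, 1 - conj a * u z ≠ 0 := fun z hz ↦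
      one_sub_conj_mul_ne_zero hlt (hnorm z hz)
    have hg : DifferentiableOn ℂ g (ball 0 1) :=
      (hu.sub_const a).div ((hu.const_mul _).const_sub 1) hden
    have hgmaps : MapsTo g (ball 0 1) (closedBall (g 0) 1) := fun z hz ↦ by
      simpa [g, a, norm_div] using div_le_one_of_le₀
        (norm_sub_le_norm_one_sub_conj_mul hlt.le (hnorm z hz)) (norm_nonneg _)
    have hga : deriv g 0 = deriv u 0 / (1 - ‖a‖ ^ 2) := by
      have hud := (hu.differentiableAt (isOpen_ball.mem_nhds h0)).hasDerivAt
      have := (hud.sub_const a).fun_div ((hud.const_mul (conj a)).const_sub 1) (hden 0 h0)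
      rw [← ha, sub_self, zero_mul, sub_zero] at this
      rw [this.deriv, ← Complex.conj_mul' a]
      field_simp [hden 0 h0]
    have hpos : 0 < 1 - ‖a‖ ^ 2 := by nlinarith [norm_nonneg a]
    have hnorm_pos : ‖(1 - ‖a‖ ^ 2 : ℂ)‖ = 1 - ‖a‖ ^ 2 := by
      norm_cast
      exact Real.norm_of_nonneg hpos.le
    have := norm_deriv_le_one_of_mapsTo_ball hg hgmaps one_pos
    rwa [hga, norm_div, hnorm_pos, div_le_one hpos] at this
  · have hmax : IsMaxOn (norm ∘ u) (ball 0 1) 0 := fun z hz ↦ by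
      simpa [← heq] using hnorm z hz
    have hconst : u =ᶠ[𝓝 0] fun _ ↦ u 0 :=
      eventually_of_mem (isOpen_ball.mem_nhds h0) (Complex.eqOn_of_isPreconnected_of_isMaxOn_norm
        (convex_ball 0 1).isPreconnected isOpen_ball hu h0 hmax)
    simp [hconst.deriv_eq, heq]

theorem norm_iteratedDeriv_two_div_two_le_of_mapsTo_closedBall {ω : ℂ → ℂ}
    (hω : DifferentiableOn ℂ ω (ball 0 1)) (hmaps : MapsTo ω (ball 0 1) (closedBall 0 1))
    (hω0 : ω 0 = 0) :
    ‖iteratedDeriv 2 ω 0 / 2‖ ≤ 1 - ‖deriv ω 0‖ ^ 2 := by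
  have hball : ball (0 : ℂ) 1 ∈ 𝓝 0 := ball_mem_nhds 0 one_pos
  set u := dslope ω 0
  have hu : DifferentiableOn ℂ u (ball 0 1) := (differentiableOn_dslope hball).2 hω
  have humaps : MapsTo u (ball 0 1) (closedBall 0 1) := fun z hz ↦ by
    simpa using norm_dslope_le_div_of_mapsTo_ball hω (by rwa [hω0]) hz
  have hωu : ω = fun z ↦ z * u z := funext fun z ↦ by
    simpa [hω0] using (sub_smul_dslope ω 0 z).symm
  have hu0 : deriv ω 0 = u 0 := (dslope_same ω 0).symm
  have hω2 : iteratedDeriv 2 ω 0 / 2 = deriv u 0 := by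
    rw [hωu, AnalyticAt.iteratedDeriv_two_mul (f := fun z ↦ z) analyticAt_id (hu.analyticAt hball)]
    simp [iteratedDeriv_fun_id_zero]
  rw [hω2, hu0]
  exact norm_deriv_le_one_sub_sq_of_mapsTo_closedBall hu humaps

end SchwarzPick

theorem Subordinate.exists_coeff {p φ : ℂ → ℂ} (h : Subordinate p φ) (hφ : AnalyticAt ℂ φ 0) :
    ∃ c₁ c₂ : ℂ, ‖c₂‖ ≤ 1 - ‖c₁‖ ^ 2 ∧ deriv p 0 = deriv φ 0 * c₁ ∧
      iteratedDeriv 2 p 0 = iteratedDeriv 2 φ 0 * c₁ ^ 2 + 2 * deriv φ 0 * c₂ := by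
  obtain ⟨ω, hω, hω0, hmaps, hpω⟩ := h
  have hball : ball (0 : ℂ) 1 ∈ 𝓝 0 := ball_mem_nhds 0 one_pos
  have hφω : AnalyticAt ℂ φ (ω 0) := by rwa [hω0]
  have hωa : AnalyticAt ℂ ω 0 := hω.analyticAt hball
  have hpω' : p =ᶠ[𝓝 0] fun z ↦ φ (ω z) := eventually_of_mem hball hpω
  refine ⟨deriv ω 0, iteratedDeriv 2 ω 0 / 2,
    norm_iteratedDeriv_two_div_two_le_of_mapsTo_closedBall hω
      (fun z hz ↦ ball_subset_closedBall (hmaps z hz)) hω0, ?_, ?_⟩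
  · rw [hpω'.deriv_eq, deriv_fun_comp hφω.differentiableAt hωa.differentiableAt, hω0]
  · rw [hpω'.iteratedDeriv_eq, hφω.iteratedDeriv_two_comp hωa, hω0]
    ring

theorem norm_le_of_coeff_eq {a₂ a₃ c₁ c₂ d₁ d₂ : ℂ} {B₁ B₂ : ℝ} (hB₁ : 0 < B₁)
    (hc : ‖c₂‖ ≤ 1 - ‖c₁‖ ^ 2) (hd : ‖d₂‖ ≤ 1 - ‖d₁‖ ^ 2)
    (hc₁ : 2 * a₂ = B₁ * c₁) (hc₂ : 6 * a₃ - 4 * a₂ ^ 2 = B₁ * c₂ + B₂ * c₁ ^ 2)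
    (hd₁ : -2 * a₂ = B₁ * d₁) (hd₂ : 6 * a₂ ^ 2 - 3 * a₃ = B₁ * d₂ + B₂ * d₁ ^ 2) :
    ‖a₃‖ ≤ 5 * (B₁ + |B₂ - B₁|) / 12 := by
  have hd₁c₁ : d₁ = -c₁ := by
    have : (B₁ : ℂ) * (d₁ + c₁) = 0 := by linear_combination -(hd₁ + hc₁)
    linear_combination (mul_eq_zero.1 this).resolve_left (by exact_mod_cast hB₁.ne')
  have key : 12 * a₃ = 3 * B₁ * (c₂ + c₁ ^ 2) + 2 * B₁ * (d₂ + d₁ ^ 2) +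
      5 * (B₂ - B₁ : ℂ) * c₁ ^ 2 := by
    rw [hd₁c₁] at hd₂ ⊢
    linear_combination 3 * hc₂ + 2 * hd₂
  have hc' : ‖c₂ + c₁ ^ 2‖ ≤ 1 := (norm_add_le _ _).trans (by rw [norm_pow]; linarith)
  have hd' : ‖d₂ + d₁ ^ 2‖ ≤ 1 := (norm_add_le _ _).trans (by rw [norm_pow]; linarith)
  have hc₁' : ‖c₁‖ ^ 2 ≤ 1 := by linarith [norm_nonneg c₂]
  have hB : ‖(B₂ - B₁ : ℂ)‖ = |B₂ - B₁| := by
    rw [← Complex.ofReal_sub, Complex.norm_real, Real.norm_eq_abs]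
  have : 12 * ‖a₃‖ ≤ 3 * B₁ * 1 + 2 * B₁ * 1 + 5 * |B₂ - B₁| * 1 := by
    calc 12 * ‖a₃‖ = ‖12 * a₃‖ := by simp
      _ ≤ 3 * B₁ * ‖c₂ + c₁ ^ 2‖ + 2 * B₁ * ‖d₂ + d₁ ^ 2‖ + 5 * |B₂ - B₁| * ‖c₁‖ ^ 2 := by
        rw [key]
        refine (norm_add₃_le).trans_eq ?_
        simp [abs_of_pos hB₁, hB]
      _ ≤ 3 * B₁ * 1 + 2 * B₁ * 1 + 5 * |B₂ - B₁| * 1 := by gcongr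
  linarith

theorem stmt12_general
    (f F : ℂ → ℂ)
    (hf : DifferentiableOn ℂ f (ball 0 1)) (hf0 : f 0 = 0) (hf1 : deriv f 0 = 1)
    (hF : DifferentiableOn ℂ F (ball 0 1))
    (hFf : ∀ᶠ z in nhds (0 : ℂ), F (f z) = z)
    (φ : ℂ → ℂ) (B₁ B₂ : ℝ)
    (hφ : DifferentiableOn ℂ φ (ball 0 1))
    (hB₁ : 0 < B₁) (hφ1 : deriv φ 0 = (B₁ : ℂ)) (hφ2 : iteratedDeriv 2 φ 0 = 2 * (B₂ : ℂ))
    (hfsub : Subordinate (fun z => 1 + z * deriv (deriv f) z / deriv f z) φ)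
    (hFsub : Subordinate (deriv F) φ) :
    ‖iteratedDeriv 3 f 0 / 6‖ ≤ 5 * (B₁ + |B₂ - B₁|) / 12 := by
  have hball : ball (0 : ℂ) 1 ∈ 𝓝 0 := ball_mem_nhds 0 one_pos
  have hfa : AnalyticAt ℂ f 0 := hf.analyticAt hball
  have hFa : AnalyticAt ℂ F (f 0) := by rw [hf0]; exact hF.analyticAt hball
  obtain ⟨c₁, c₂, hc, hp₁, hp₂⟩ := hfsub.exists_coeff (hφ.analyticAt hball)
  obtain ⟨d₁, d₂, hd, hq₁, hq₂⟩ := hFsub.exists_coeff (hφ.analyticAt hball)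
  obtain ⟨hf₂, hf₃⟩ := deriv_and_iteratedDeriv_two_one_add_mul_deriv_div_deriv hfa hf1
  obtain ⟨hF₂, hF₃⟩ := deriv_eq_and_iteratedDeriv_two_eq_of_comp_mul_deriv_eq_one hfa hFa.deriv hf1
    (eventually_deriv_comp_mul_deriv_eq_one hfa hFa hFf)
  rw [hf0] at hF₂ hF₃
  rw [hφ1] at hp₁ hp₂ hq₁ hq₂
  rw [hφ2] at hp₂ hq₂
  refine norm_le_of_coeff_eq (a₂ := iteratedDeriv 2 f 0 / 2) hB₁ hc hd ?_ ?_ ?_ ?_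
  · linear_combination hp₁ - hf₂
  · linear_combination (hp₂ - hf₃) / 2
  · linear_combination hq₁ - hF₂
  · linear_combination (hq₂ - hF₃) / 2

theorem stmt12
    (f F : ℂ → ℂ)
    (hf : DifferentiableOn ℂ f (ball 0 1)) (hf0 : f 0 = 0) (hf1 : deriv f 0 = 1)
    (hfi : InjOn f (ball 0 1))
    (hF : DifferentiableOn ℂ F (ball 0 1)) (hF0 : F 0 = 0) (hFi : InjOn F (ball 0 1))
    (hFf : ∀ᶠ z in nhds (0 : ℂ), F (f z) = z)
    (φ : ℂ → ℂ) (B₁ B₂ : ℝ)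
    (hφ : DifferentiableOn ℂ φ (ball 0 1)) (hφ0 : φ 0 = 1)
    (hB₁ : 0 < B₁) (hφ1 : deriv φ 0 = (B₁ : ℂ)) (hφ2 : iteratedDeriv 2 φ 0 = 2 * (B₂ : ℂ))
    (hfsub : Subordinate (fun z => 1 + z * deriv (deriv f) z / deriv f z) φ)
    (hFsub : Subordinate (deriv F) φ) :
    ‖iteratedDeriv 3 f 0 / 6‖ ≤ 5 * (B₁ + |B₂ - B₁|) / 12 :=
  stmt12_general f F hf hf0 hf1 hF hFf φ B₁ B₂ hφ hB₁ hφ1 hφ2 hfsub hFsub
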